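/- arXiv:0810.4666 — 3 statements merged into one kernel-verified Lean document; each statement's English description precedes it below -/
import Mathlib

section
/- Let n ≥ 1, let λ be a partition with at most n parts, and let d ≥ 0 be an integer. Then the number of semistandard tableaux of shape (d) with entries in {1, …, n} times the number of semistandard tableaux of shape λ with entries in {1, …, n} equals the sum, over all partitions μ with at most n parts obtained from λ by adding d boxes no two of which are in the same column (i.e., λ ⊆ μ, |μ| = |λ| + d, and μ_{i+1} ≤ λ_i for all i ≥ 1), of the number of semistandard tableaux of shape μ with entries in {1, …, n}. -/
/-!
Erasing the entries `n + 1` of a semistandard tableau with entries in `{1, …, n + 1}` leaves a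
tableau with entries in `{1, …, n}` whose shape `ν` differs from the shape `μ` by a horizontal
strip, and the erased boxes can be refilled in only one way.  Writing `s_n(μ)` for the number of
tableaux, this gives the branching rule `s_{n+1}(μ) = ∑ s_n(ν)` over such `ν`.

Pieri's identity then follows by induction on `n`.  Branching both factors of
`s_{n+1}((d)) · s_{n+1}(λ)` and using the identity for `n` turns it into a sum of `s_n(ρ)` over
pairs `(ν, ρ)` such that `λ / ν` and `ρ / ν` are horizontal strips and `|ρ| ≤ |ν| + d`; branching
the right-hand side turns it into a sum of `s_n(ρ)` over pairs `(μ, ρ)` such that `μ / λ` and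
`μ / ρ` are horizontal strips and `|μ| = |λ| + d`.  For fixed `λ` and `ρ`, both `ν_i` and
`μ_{i+1}` range over the interval `[max λ_{i+1} ρ_{i+1}, min λ_i ρ_i]`, and reflecting in these
intervals, with `μ_1` fixed by the size of `μ`, matches the two families of pairs.
-/

/-- The number of semistandard tableaux of shape `μ` (a 1-indexed sequence of row
lengths) with entries in `{1, …, n}`: fillings `T` of the Young diagram of `μ`
(encoded as functions `ℕ → ℕ → ℕ`, with `T i j` the entry in row `i`, column `j`,
equal to `0` exactly outside the diagram) with entries in `{1, …, n}` that weakly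
increase along rows and strictly increase down columns. -/
noncomputable def ssytCount (n : ℕ) (μ : ℕ → ℕ) : ℕ :=
  Nat.card {T : ℕ → ℕ → ℕ //
    (∀ i j, T i j ≠ 0 ↔ 1 ≤ i ∧ 1 ≤ j ∧ j ≤ μ i) ∧
    (∀ i j, 1 ≤ i → 1 ≤ j → j ≤ μ i → T i j ≤ n) ∧
    (∀ i j, 1 ≤ i → 1 ≤ j → j + 1 ≤ μ i → T i j ≤ T i (j + 1)) ∧
    (∀ i j, 1 ≤ i → 1 ≤ j → j ≤ μ (i + 1) → T i j < T (i + 1) j)}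

open Finset

/-- `μ` is a partition with at most `n` parts, indexed from `1` (so `μ 0 = 0`). -/
structure IsPartition (n : ℕ) (μ : ℕ → ℕ) : Prop where
  apply_zero : μ 0 = 0
  succ_le : ∀ i, 1 ≤ i → μ (i + 1) ≤ μ i
  apply_eq_zero : ∀ i, n < i → μ i = 0

/-- The skew shape `μ / ν` is a horizontal strip. -/
structure IsHorizontalStrip (ν μ : ℕ → ℕ) : Prop where
  le : ∀ i, 1 ≤ i → ν i ≤ μ i
  succ_le : ∀ i, 1 ≤ i → μ (i + 1) ≤ ν i

def partSize (n : ℕ) (μ : ℕ → ℕ) : ℕ := ∑ i ∈ range n, μ (i + 1)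

def rowShape (d : ℕ) : ℕ → ℕ := fun i => if i = 1 then d else 0

structure IsSSYT (n : ℕ) (μ : ℕ → ℕ) (T : ℕ → ℕ → ℕ) : Prop where
  ne_zero_iff : ∀ i j, T i j ≠ 0 ↔ 1 ≤ i ∧ 1 ≤ j ∧ j ≤ μ i
  le_of_mem : ∀ i j, 1 ≤ i → 1 ≤ j → j ≤ μ i → T i j ≤ n
  row_le : ∀ i j, 1 ≤ i → 1 ≤ j → j + 1 ≤ μ i → T i j ≤ T i (j + 1)
  col_lt : ∀ i j, 1 ≤ i → 1 ≤ j → j ≤ μ (i + 1) → T i j < T (i + 1) j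

theorem ssytCount_eq_card (n : ℕ) (μ : ℕ → ℕ) :
    ssytCount n μ = Nat.card {T // IsSSYT n μ T} :=
  Nat.card_congr <| Equiv.subtypeEquivRight fun _ =>
    ⟨fun ⟨h₁, h₂, h₃, h₄⟩ => ⟨h₁, h₂, h₃, h₄⟩, fun ⟨h₁, h₂, h₃, h₄⟩ => ⟨h₁, h₂, h₃, h₄⟩⟩

theorem partSize_eq_sum_Icc (n : ℕ) (μ : ℕ → ℕ) : partSize n μ = ∑ i ∈ Icc 1 n, μ i := by
  rw [partSize, ← Ico_add_one_right_eq_Icc, sum_Ico_eq_sum_range, Nat.add_sub_cancel]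
  simp only [add_comm]

theorem partSize_succ_of_eq_zero {n : ℕ} {μ : ℕ → ℕ} (h : μ (n + 1) = 0) :
    partSize (n + 1) μ = partSize n μ := by
  rw [partSize, sum_range_succ, h, add_zero, partSize]

namespace IsPartition

variable {n : ℕ} {μ : ℕ → ℕ}

theorem antitone (h : IsPartition n μ) {i j : ℕ} (hi : 1 ≤ i) (hij : i ≤ j) : μ j ≤ μ i :=
  Nat.rel_of_forall_rel_succ_of_le_of_le (· ≥ ·) h.succ_le hi hij

theorem le_apply_one (h : IsPartition n μ) (i : ℕ) : μ i ≤ μ 1 := by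
  rcases Nat.eq_zero_or_pos i with rfl | hi
  · simp [h.apply_zero]
  · exact h.antitone le_rfl hi

theorem apply_le_partSize (h : IsPartition n μ) (i : ℕ) : μ i ≤ partSize n μ := by
  rcases n with _ | n
  · rcases Nat.eq_zero_or_pos i with rfl | hi
    · simp [h.apply_zero]
    · simp [h.apply_eq_zero i hi]
  · calc μ i ≤ μ 1 := h.le_apply_one i
      _ ≤ partSize (n + 1) μ :=
        single_le_sum (f := fun i => μ (i + 1)) (fun _ _ => Nat.zero_le _) (mem_range.2 n.succ_pos)

theorem eq_zero_of_zero (h : IsPartition 0 μ) : μ = 0 := by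
  funext i
  rcases Nat.eq_zero_or_pos i with rfl | hi
  · exact h.apply_zero
  · exact h.apply_eq_zero i hi

end IsPartition

theorem isPartition_rowShape {n d : ℕ} (h : rowShape d (n + 1) = 0) :
    IsPartition n (rowShape d) where
  apply_zero := rfl
  succ_le i hi := by simp only [rowShape, if_neg (show i + 1 ≠ 1 by omega), Nat.zero_le]
  apply_eq_zero i hi := by
    simp only [rowShape] at h ⊢
    split_ifs at h ⊢ <;> omega

theorem finite_setOf_isPartition (n M : ℕ) : {μ | IsPartition n μ ∧ μ 1 ≤ M}.Finite := by
  refine (Set.finite_range fun (g : Fin (n + 1) → Fin (M + 1)) (i : ℕ) =>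
    if h : i < n + 1 then (g ⟨i, h⟩ : ℕ) else 0).subset ?_
  rintro μ ⟨hμ, hM⟩
  refine ⟨fun i => ⟨μ i, Nat.lt_succ_of_le ((hμ.le_apply_one i).trans hM)⟩, funext fun i => ?_⟩
  dsimp only
  split_ifs with h
  · rfl
  · exact (hμ.apply_eq_zero i (by omega)).symm

namespace IsHorizontalStrip

variable {n : ℕ} {ν μ : ℕ → ℕ}

theorem succ_le_left (h : IsHorizontalStrip ν μ) {i : ℕ} (hi : 1 ≤ i) : ν (i + 1) ≤ ν i :=
  (h.le (i + 1) (by omega)).trans (h.succ_le i hi)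

theorem isPartition_left (h : IsHorizontalStrip ν μ) (hμ : IsPartition n μ) (hν : ν 0 = 0) :
    IsPartition n ν where
  apply_zero := hν
  succ_le _ := h.succ_le_left
  apply_eq_zero i hi := Nat.eq_zero_of_le_zero <| hμ.apply_eq_zero i hi ▸ h.le i (by omega)

theorem isPartition_right (h : IsHorizontalStrip ν μ) (hν : IsPartition n ν) (hμ : μ 0 = 0) :
    IsPartition (n + 1) μ where
  apply_zero := hμ
  succ_le i hi := (h.succ_le i hi).trans (h.le i hi)
  apply_eq_zero i hi := by
    obtain ⟨i, rfl⟩ : ∃ k, i = k + 1 := ⟨i - 1, by omega⟩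
    exact Nat.eq_zero_of_le_zero <| hν.apply_eq_zero i (by omega) ▸ h.succ_le i (by omega)

theorem partSize_le (h : IsHorizontalStrip ν μ) (n : ℕ) : partSize n ν ≤ partSize n μ :=
  sum_le_sum fun i _ => h.le (i + 1) (by omega)

end IsHorizontalStrip

section PartitionFinsets

variable {n d : ℕ} {lam ν μ : ℕ → ℕ}

theorem finite_stripsBelow (n : ℕ) (μ : ℕ → ℕ) :
    {ν | IsPartition n ν ∧ IsHorizontalStrip ν μ}.Finite :=
  (finite_setOf_isPartition n (μ 1)).subset fun _ ⟨hν, h⟩ => ⟨hν, h.le 1 le_rfl⟩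

noncomputable def stripsBelow (n : ℕ) (μ : ℕ → ℕ) : Finset (ℕ → ℕ) :=
  (finite_stripsBelow n μ).toFinset

theorem mem_stripsBelow : ν ∈ stripsBelow n μ ↔ IsPartition n ν ∧ IsHorizontalStrip ν μ :=
  Set.Finite.mem_toFinset _

theorem finite_pieriShapes (n : ℕ) (lam : ℕ → ℕ) (d : ℕ) :
    {μ | IsPartition n μ ∧ IsHorizontalStrip lam μ ∧ partSize n μ = partSize n lam + d}.Finite :=
  (finite_setOf_isPartition n (partSize n lam + d)).subset fun _ ⟨hμ, _, hsize⟩ =>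
    ⟨hμ, hsize ▸ hμ.apply_le_partSize 1⟩

noncomputable def pieriShapes (n : ℕ) (lam : ℕ → ℕ) (d : ℕ) : Finset (ℕ → ℕ) :=
  (finite_pieriShapes n lam d).toFinset

theorem mem_pieriShapes :
    μ ∈ pieriShapes n lam d ↔
      IsPartition n μ ∧ IsHorizontalStrip lam μ ∧ partSize n μ = partSize n lam + d :=
  Set.Finite.mem_toFinset _

theorem finite_pieriShapesUpTo (n : ℕ) (lam : ℕ → ℕ) (d : ℕ) :
    {μ | IsPartition n μ ∧ IsHorizontalStrip lam μ ∧ partSize n μ ≤ partSize n lam + d}.Finite :=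
  (finite_setOf_isPartition n (partSize n lam + d)).subset fun _ ⟨hμ, _, hsize⟩ =>
    ⟨hμ, (hμ.apply_le_partSize 1).trans hsize⟩

noncomputable def pieriShapesUpTo (n : ℕ) (lam : ℕ → ℕ) (d : ℕ) : Finset (ℕ → ℕ) :=
  (finite_pieriShapesUpTo n lam d).toFinset

theorem mem_pieriShapesUpTo :
    μ ∈ pieriShapesUpTo n lam d ↔
      IsPartition n μ ∧ IsHorizontalStrip lam μ ∧ partSize n μ ≤ partSize n lam + d :=
  Set.Finite.mem_toFinset _

theorem sum_pieriShapesUpTo {M : Type*} [AddCommMonoid M] (f : (ℕ → ℕ) → M) :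
    ∑ μ ∈ pieriShapesUpTo n lam d, f μ = ∑ e ∈ range (d + 1), ∑ μ ∈ pieriShapes n lam e, f μ := by
  rw [sum_comm' (t' := pieriShapesUpTo n lam d) (s' := fun μ => {partSize n μ - partSize n lam})]
  · simp only [sum_singleton]
  · intro e μ
    simp only [mem_range, mem_pieriShapes, mem_pieriShapesUpTo, mem_singleton]
    constructor
    · rintro ⟨he, hμ, h, hsize⟩
      exact ⟨by omega, hμ, h, by omega⟩
    · rintro ⟨rfl, hμ, h, hsize⟩
      have := h.partSize_le n
      exact ⟨by omega, hμ, h, by omega⟩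

end PartitionFinsets

namespace IsSSYT

variable {n : ℕ} {μ : ℕ → ℕ} {T : ℕ → ℕ → ℕ}

theorem eq_zero (h : IsSSYT n μ T) {i j : ℕ} (hij : ¬(1 ≤ i ∧ 1 ≤ j ∧ j ≤ μ i)) : T i j = 0 :=
  not_not.1 fun h0 => hij ((h.ne_zero_iff i j).1 h0)

theorem le (h : IsSSYT n μ T) (i j : ℕ) : T i j ≤ n := by
  by_cases h0 : T i j = 0
  · omega
  · obtain ⟨hi, hj, hjμ⟩ := (h.ne_zero_iff i j).1 h0
    exact h.le_of_mem i j hi hj hjμ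

theorem row_mono (h : IsSSYT n μ T) {i j k : ℕ} (hi : 1 ≤ i) (hj : 1 ≤ j) (hjk : j ≤ k)
    (hk : k ≤ μ i) : T i j ≤ T i k := by
  induction k, hjk using Nat.le_induction with
  | base => exact le_rfl
  | succ k hjk ih => exact (ih (by omega)).trans (h.row_le i k hi (by omega) hk)

theorem le_apply (h : IsSSYT n μ T) (hμ : ∀ i, 1 ≤ i → μ (i + 1) ≤ μ i) {i j : ℕ} (hi : 1 ≤ i)
    (hj : 1 ≤ j) (hjμ : j ≤ μ i) : i ≤ T i j := by
  induction i, hi using Nat.le_induction generalizing j with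
  | base => exact Nat.one_le_iff_ne_zero.2 ((h.ne_zero_iff 1 j).2 ⟨le_rfl, hj, hjμ⟩)
  | succ i hi ih => exact (ih hj (hjμ.trans (hμ i hi))).trans_lt (h.col_lt i j hi hj hjμ)

theorem finite {m : ℕ} (hμ : IsPartition m μ) : Finite {T // IsSSYT n μ T} := by
  refine Finite.of_injective (fun T : {T // IsSSYT n μ T} => fun p : Fin (m + 1) × Fin (μ 1 + 1) =>
    (⟨T.1 p.1 p.2, Nat.lt_succ_of_le (T.2.le _ _)⟩ : Fin (n + 1))) fun T S hTS => ?_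
  refine Subtype.ext (funext₂ fun i j => ?_)
  by_cases hij : i ≤ m ∧ j ≤ μ 1
  · simpa using congr_fun hTS (⟨i, by omega⟩, ⟨j, by omega⟩)
  · have hout : ¬(1 ≤ i ∧ 1 ≤ j ∧ j ≤ μ i) := fun ⟨_, hj, hjμ⟩ =>
      hij ⟨not_lt.1 fun him => by have := hμ.apply_eq_zero i him; omega,
        hjμ.trans (hμ.le_apply_one i)⟩
    rw [T.2.eq_zero hout, S.2.eq_zero hout]

end IsSSYT

theorem ssytCount_eq_zero {n : ℕ} {μ : ℕ → ℕ} (hμ : ∀ i, 1 ≤ i → μ (i + 1) ≤ μ i)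
    (h : μ (n + 1) ≠ 0) : ssytCount n μ = 0 := by
  rw [ssytCount_eq_card, Nat.card_eq_zero]
  refine Or.inl ⟨fun T => ?_⟩
  have := T.2.le_apply hμ (i := n + 1) (j := 1) (by omega) le_rfl (by omega)
  have := T.2.le (n + 1) 1
  omega

theorem ssytCount_zero_shape (n : ℕ) : ssytCount n 0 = 1 := by
  rw [ssytCount_eq_card, Nat.card_eq_one_iff_unique]
  refine ⟨⟨fun T S => Subtype.ext (funext₂ fun i j => ?_)⟩, ⟨⟨0, ?_, ?_, ?_, ?_⟩⟩⟩
  · have hout : ¬(1 ≤ i ∧ 1 ≤ j ∧ j ≤ (0 : ℕ → ℕ) i) := by simp only [Pi.zero_apply]; omega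
    rw [T.2.eq_zero hout, S.2.eq_zero hout]
  · intro i j
    simp only [Pi.zero_apply, ne_eq, not_true_eq_false, false_iff]
    omega
  all_goals
    intro i j _ _ h
    simp only [Pi.zero_apply] at h
    omega

section Branching

variable {n : ℕ} {ν μ : ℕ → ℕ} {T : ℕ → ℕ → ℕ}

def shapeBelow (n : ℕ) (μ : ℕ → ℕ) (T : ℕ → ℕ → ℕ) (i : ℕ) : ℕ :=
  Nat.findGreatest (fun j => 1 ≤ j ∧ T i j ≤ n) (μ i)

def eraseAbove (n : ℕ) (T : ℕ → ℕ → ℕ) : ℕ → ℕ → ℕ :=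
  fun i j => if T i j ≤ n then T i j else 0

def fillEmpty (c : ℕ) (μ : ℕ → ℕ) (T : ℕ → ℕ → ℕ) : ℕ → ℕ → ℕ :=
  fun i j => if T i j = 0 ∧ 1 ≤ i ∧ 1 ≤ j ∧ j ≤ μ i then c else T i j

theorem shapeBelow_le (n : ℕ) (μ : ℕ → ℕ) (T : ℕ → ℕ → ℕ) (i : ℕ) :
    shapeBelow n μ T i ≤ μ i :=
  Nat.findGreatest_le _

theorem IsSSYT.le_iff_le_shapeBelow {m : ℕ} (h : IsSSYT m μ T) {i j : ℕ} (hi : 1 ≤ i)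
    (hj : 1 ≤ j) (hjμ : j ≤ μ i) : T i j ≤ n ↔ j ≤ shapeBelow n μ T i := by
  refine ⟨fun hT => Nat.le_findGreatest hjμ ⟨hj, hT⟩, fun hle => ?_⟩
  have hlast : 1 ≤ shapeBelow n μ T i ∧ T i (shapeBelow n μ T i) ≤ n :=
    Nat.findGreatest_of_ne_zero (m := shapeBelow n μ T i) rfl (by omega)
  exact (h.row_mono hi hj hle (shapeBelow_le n μ T i)).trans hlast.2

theorem IsSSYT.isHorizontalStrip_shapeBelow (h : IsSSYT (n + 1) μ T) (hμ : IsPartition (n + 1) μ) :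
    IsHorizontalStrip (shapeBelow n μ T) μ where
  le i _ := shapeBelow_le n μ T i
  succ_le i hi := by
    rcases Nat.eq_zero_or_pos (μ (i + 1)) with h0 | h0
    · omega
    have hlt := h.col_lt i _ hi h0 le_rfl
    have := h.le (i + 1) (μ (i + 1))
    exact (h.le_iff_le_shapeBelow hi h0 (hμ.succ_le i hi)).1 (by omega)

theorem IsSSYT.isPartition_shapeBelow (h : IsSSYT (n + 1) μ T) (hμ : IsPartition (n + 1) μ) :
    IsPartition n (shapeBelow n μ T) where
  apply_zero := by simp [shapeBelow, hμ.apply_zero]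
  succ_le _ := (h.isHorizontalStrip_shapeBelow hμ).succ_le_left
  apply_eq_zero i hi := by
    by_contra h0
    have hle := shapeBelow_le n μ T i
    have hlast := (h.le_iff_le_shapeBelow (n := n) (by omega) (by omega) hle).2 le_rfl
    have := h.le_apply hμ.succ_le (by omega) (by omega) hle
    omega

theorem IsSSYT.isSSYT_eraseAbove {m : ℕ} (h : IsSSYT m μ T) :
    IsSSYT n (shapeBelow n μ T) (eraseAbove n T) where
  ne_zero_iff i j := by
    simp only [eraseAbove]
    split_ifs with hT
    · rw [h.ne_zero_iff]
      constructor
      · rintro ⟨hi, hj, hjμ⟩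
        exact ⟨hi, hj, (h.le_iff_le_shapeBelow hi hj hjμ).1 hT⟩
      · rintro ⟨hi, hj, hjν⟩
        exact ⟨hi, hj, hjν.trans (shapeBelow_le n μ T i)⟩
    · simp only [ne_eq, not_true_eq_false, false_iff]
      rintro ⟨hi, hj, hjν⟩
      exact hT ((h.le_iff_le_shapeBelow hi hj (hjν.trans (shapeBelow_le n μ T i))).2 hjν)
  le_of_mem i j _ _ _ := by
    simp only [eraseAbove]
    split_ifs <;> omega
  row_le i j hi hj hjν := by
    have hjμ := hjν.trans (shapeBelow_le n μ T i)
    have hle := (h.le_iff_le_shapeBelow hi (by omega) hjμ).2 hjν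
    have hrow := h.row_le i j hi hj hjμ
    simp only [eraseAbove, if_pos hle, if_pos (hrow.trans hle), hrow]
  col_lt i j hi hj hjν := by
    have hjμ := hjν.trans (shapeBelow_le n μ T (i + 1))
    have hle := (h.le_iff_le_shapeBelow (by omega) hj hjμ).2 hjν
    have hcol := h.col_lt i j hi hj hjμ
    simp only [eraseAbove, if_pos hle, if_pos (hcol.le.trans hle), hcol]

theorem IsSSYT.fillEmpty_of_le (h : IsSSYT n ν T) (c : ℕ) {i j : ℕ} (hi : 1 ≤ i) (hj : 1 ≤ j)
    (hjν : j ≤ ν i) : fillEmpty c μ T i j = T i j := by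
  simp [fillEmpty, (h.ne_zero_iff i j).2 ⟨hi, hj, hjν⟩]

theorem IsSSYT.fillEmpty_of_lt (h : IsSSYT n ν T) (c : ℕ) {i j : ℕ} (hi : 1 ≤ i) (hj : 1 ≤ j)
    (hνj : ν i < j) (hjμ : j ≤ μ i) : fillEmpty c μ T i j = c := by
  simp [fillEmpty, h.eq_zero (i := i) (j := j) (by omega), hi, hj, hjμ]

theorem IsSSYT.isSSYT_fillEmpty (h : IsSSYT n ν T) (hs : IsHorizontalStrip ν μ) :
    IsSSYT (n + 1) μ (fillEmpty (n + 1) μ T) where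
  ne_zero_iff i j := by
    simp only [fillEmpty]
    split_ifs with hc
    · simp [hc.2]
    · rw [h.ne_zero_iff]
      constructor
      · rintro ⟨hi, hj, hjν⟩
        exact ⟨hi, hj, hjν.trans (hs.le i hi)⟩
      · intro hbox
        rw [← h.ne_zero_iff]
        exact fun h0 => hc ⟨h0, hbox⟩
  le_of_mem i j _ _ _ := by
    have := h.le i j
    simp only [fillEmpty]
    split_ifs <;> omega
  row_le i j hi hj hjμ := by
    by_cases hjν : j + 1 ≤ ν i
    · rw [h.fillEmpty_of_le _ hi hj (by omega), h.fillEmpty_of_le _ hi (by omega) hjν]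
      exact h.row_le i j hi hj hjν
    · rw [h.fillEmpty_of_lt _ hi (by omega) (by omega) hjμ]
      by_cases hjν' : j ≤ ν i
      · rw [h.fillEmpty_of_le _ hi hj hjν']
        exact (h.le i j).trans (Nat.le_succ n)
      · rw [h.fillEmpty_of_lt _ hi hj (by omega) (by omega)]
  col_lt i j hi hj hjμ := by
    rw [h.fillEmpty_of_le _ hi hj (hjμ.trans (hs.succ_le i hi))]
    by_cases hjν : j ≤ ν (i + 1)
    · rw [h.fillEmpty_of_le _ (by omega) hj hjν]
      exact h.col_lt i j hi hj hjν
    · rw [h.fillEmpty_of_lt _ (by omega) hj (by omega) hjμ]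
      exact Nat.lt_succ_of_le (h.le i j)

theorem IsSSYT.eraseAbove_fillEmpty (h : IsSSYT n ν T) :
    eraseAbove n (fillEmpty (n + 1) μ T) = T := by
  funext i j
  have := h.le i j
  simp only [eraseAbove, fillEmpty]
  split_ifs <;> omega

theorem IsSSYT.fillEmpty_eraseAbove (h : IsSSYT (n + 1) μ T) :
    fillEmpty (n + 1) μ (eraseAbove n T) = T := by
  funext i j
  have := h.le i j
  have := h.ne_zero_iff i j
  simp only [eraseAbove, fillEmpty]
  split_ifs <;> simp_all <;> omega

theorem IsSSYT.shapeBelow_fillEmpty (h : IsSSYT n ν T) (hs : IsHorizontalStrip ν μ)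
    (hν : IsPartition n ν) (hμ : IsPartition (n + 1) μ) :
    shapeBelow n μ (fillEmpty (n + 1) μ T) = ν := by
  funext i
  rcases Nat.eq_zero_or_pos i with rfl | hi
  · simp [shapeBelow, hμ.apply_zero, hν.apply_zero]
  refine Nat.findGreatest_eq_iff.2 ⟨hs.le i hi, fun h0 => ?_, fun k hk hkμ hP => ?_⟩
  · rw [h.fillEmpty_of_le _ hi (by omega) le_rfl]
    exact ⟨by omega, h.le i (ν i)⟩
  · rw [h.fillEmpty_of_lt _ hi (by omega) hk hkμ] at hP
    omega

noncomputable def ssytSuccEquiv (hμ : IsPartition (n + 1) μ) :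
    {T // IsSSYT (n + 1) μ T} ≃ Σ ν : stripsBelow n μ, {T // IsSSYT n ν T} where
  toFun T := ⟨⟨shapeBelow n μ T, mem_stripsBelow.2
      ⟨T.2.isPartition_shapeBelow hμ, T.2.isHorizontalStrip_shapeBelow hμ⟩⟩,
    ⟨eraseAbove n T, T.2.isSSYT_eraseAbove⟩⟩
  invFun p := ⟨fillEmpty (n + 1) μ p.2, p.2.2.isSSYT_fillEmpty (mem_stripsBelow.1 p.1.2).2⟩
  left_inv T := Subtype.ext T.2.fillEmpty_eraseAbove
  right_inv p := Sigma.subtype_ext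
    (Subtype.ext (p.2.2.shapeBelow_fillEmpty (mem_stripsBelow.1 p.1.2).2
      (mem_stripsBelow.1 p.1.2).1 hμ))
    p.2.2.eraseAbove_fillEmpty

theorem ssytCount_succ (hμ : IsPartition (n + 1) μ) :
    ssytCount (n + 1) μ = ∑ ν ∈ stripsBelow n μ, ssytCount n ν := by
  have (ν : stripsBelow n μ) : Finite {T // IsSSYT n ν T} :=
    IsSSYT.finite (mem_stripsBelow.1 ν.2).1
  rw [ssytCount_eq_card, Nat.card_congr (ssytSuccEquiv hμ), Nat.card_sigma]
  simp only [ssytCount_eq_card]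
  exact sum_coe_sort (stripsBelow n μ) fun ν => Nat.card {T // IsSSYT n ν T}

end Branching

theorem rowShape_injective : Function.Injective rowShape := fun a b h => by
  simpa [rowShape] using congr_fun h 1

theorem IsHorizontalStrip.eq_rowShape {ν : ℕ → ℕ} {d : ℕ} (h : IsHorizontalStrip ν (rowShape d))
    (hν : ν 0 = 0) : ν = rowShape (ν 1) := by
  funext i
  rcases Nat.lt_trichotomy i 1 with hi | rfl | hi
  · simp [rowShape, show i = 0 by omega, hν]
  · simp [rowShape]
  · have := h.le i (by omega)
    simp only [rowShape, if_neg (show i ≠ 1 by omega)] at this ⊢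
    omega

theorem ssytCount_rowShape_succ (n d : ℕ) :
    ssytCount (n + 1) (rowShape d) = ∑ e ∈ range (d + 1), ssytCount n (rowShape e) := by
  rw [ssytCount_succ (isPartition_rowShape rfl)]
  refine (sum_subset (s₂ := (range (d + 1)).map ⟨rowShape, rowShape_injective⟩)
    (fun ν hν => ?_) fun ν hν hν' => ?_).trans (sum_map _ _ _)
  · obtain ⟨hν, h⟩ := mem_stripsBelow.1 hν
    have h1 : ν 1 ≤ d := h.le 1 le_rfl
    exact mem_map.2 ⟨ν 1, mem_range.2 (by omega), (h.eq_rowShape hν.apply_zero).symm⟩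
  · obtain ⟨e, he, rfl⟩ := mem_map.1 hν
    simp only [Function.Embedding.coeFn_mk] at hν' ⊢
    refine ssytCount_eq_zero (isPartition_rowShape (n := 1) rfl).succ_le fun h0 => hν' ?_
    refine mem_stripsBelow.2 ⟨isPartition_rowShape h0, fun i hi => ?_, fun i hi => ?_⟩
    · have := mem_range.1 he
      simp only [rowShape]
      split_ifs <;> omega
    · simp only [rowShape, if_neg (show i + 1 ≠ 1 by omega), Nat.zero_le]

section Exchange

variable {n d : ℕ} {lam ρ ν μ : ℕ → ℕ}

theorem isHorizontalStrip_below_both_iff :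
    IsHorizontalStrip ν lam ∧ IsHorizontalStrip ν ρ ↔
      ∀ i, 1 ≤ i → max (lam (i + 1)) (ρ (i + 1)) ≤ ν i ∧ ν i ≤ min (lam i) (ρ i) := by
  simp only [max_le_iff, le_min_iff]
  exact ⟨fun ⟨h₁, h₂⟩ i hi => ⟨⟨h₁.succ_le i hi, h₂.succ_le i hi⟩, h₁.le i hi, h₂.le i hi⟩,
    fun h => ⟨⟨fun i hi => (h i hi).2.1, fun i hi => (h i hi).1.1⟩,
      ⟨fun i hi => (h i hi).2.2, fun i hi => (h i hi).1.2⟩⟩⟩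

theorem isHorizontalStrip_above_both_iff :
    IsHorizontalStrip lam μ ∧ IsHorizontalStrip ρ μ ↔ max (lam 1) (ρ 1) ≤ μ 1 ∧
      ∀ i, 1 ≤ i → max (lam (i + 1)) (ρ (i + 1)) ≤ μ (i + 1) ∧ μ (i + 1) ≤ min (lam i) (ρ i) := by
  simp only [max_le_iff, le_min_iff]
  refine ⟨fun ⟨h₁, h₂⟩ => ⟨⟨h₁.le 1 le_rfl, h₂.le 1 le_rfl⟩, fun i hi =>
    ⟨⟨h₁.le (i + 1) (by omega), h₂.le (i + 1) (by omega)⟩, h₁.succ_le i hi, h₂.succ_le i hi⟩⟩,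
    fun ⟨h₁, h⟩ => ?_⟩
  have hle (i : ℕ) (hi : 1 ≤ i) : lam i ≤ μ i ∧ ρ i ≤ μ i := by
    obtain rfl | ⟨k, hk, rfl⟩ : i = 1 ∨ ∃ k, 1 ≤ k ∧ i = k + 1 := by
      rcases Nat.lt_or_ge 1 i with h | h
      · exact Or.inr ⟨i - 1, by omega, by omega⟩
      · exact Or.inl (by omega)
    exacts [h₁, (h k hk).1]
  exact ⟨⟨fun i hi => (hle i hi).1, fun i hi => (h i hi).2.1⟩,
    ⟨fun i hi => (hle i hi).2, fun i hi => (h i hi).2.2⟩⟩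

/-- `ν_i` is reflected in `[max λ_{i+1} ρ_{i+1}, min λ_i ρ_i]` to give `μ_{i+1}`, and `μ_1` is
chosen to make `|μ| = |λ| + d`. -/
def toggleUp (n d : ℕ) (lam ρ ν : ℕ → ℕ) (i : ℕ) : ℕ :=
  if i = 0 then 0
  else if i = 1 then partSize n ν + d + max (lam 1) (ρ 1) - partSize n ρ
  else max (lam i) (ρ i) + min (lam (i - 1)) (ρ (i - 1)) - ν (i - 1)

def toggleDown (lam ρ μ : ℕ → ℕ) (i : ℕ) : ℕ :=
  if i = 0 then 0 else max (lam (i + 1)) (ρ (i + 1)) + min (lam i) (ρ i) - μ (i + 1)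

theorem toggleUp_one :
    toggleUp n d lam ρ ν 1 = partSize n ν + d + max (lam 1) (ρ 1) - partSize n ρ := rfl

theorem toggleUp_succ {i : ℕ} (hi : 1 ≤ i) :
    toggleUp n d lam ρ ν (i + 1) = max (lam (i + 1)) (ρ (i + 1)) + min (lam i) (ρ i) - ν i := by
  simp [toggleUp, show i ≠ 0 by omega]

theorem toggleDown_of_pos {i : ℕ} (hi : 1 ≤ i) :
    toggleDown lam ρ μ i = max (lam (i + 1)) (ρ (i + 1)) + min (lam i) (ρ i) - μ (i + 1) :=
  if_neg (by omega)

/-- The ends of the `i`-th reflection interval sum, over `i`, to `|λ| + |ρ| - max λ_1 ρ_1`. -/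
theorem partSize_add_partSize_succ (hρ : ρ (n + 1) = 0)
    (h : ∀ i, 1 ≤ i → i ≤ n →
      ν i + μ (i + 1) = max (lam (i + 1)) (ρ (i + 1)) + min (lam i) (ρ i)) :
    partSize n ν + partSize (n + 1) μ + max (lam 1) (ρ 1) =
      μ 1 + partSize (n + 1) lam + partSize n ρ := by
  have hpairs : partSize n ν + ∑ i ∈ range n, μ (i + 2) =
      ∑ i ∈ range n, max (lam (i + 2)) (ρ (i + 2)) +
        ∑ i ∈ range n, min (lam (i + 1)) (ρ (i + 1)) := by
    rw [partSize, ← sum_add_distrib, ← sum_add_distrib]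
    exact sum_congr rfl fun i hi => h (i + 1) (by omega) (by simp at hi; omega)
  have hmax : ∑ i ∈ range (n + 1), max (lam (i + 1)) (ρ (i + 1)) =
      ∑ i ∈ range n, max (lam (i + 2)) (ρ (i + 2)) + max (lam 1) (ρ 1) := sum_range_succ' _ _
  have hmin : ∑ i ∈ range (n + 1), min (lam (i + 1)) (ρ (i + 1)) =
      ∑ i ∈ range n, min (lam (i + 1)) (ρ (i + 1)) := by
    rw [sum_range_succ, hρ, Nat.min_zero, add_zero]
  have hmaxmin : ∑ i ∈ range (n + 1), max (lam (i + 1)) (ρ (i + 1)) +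
      ∑ i ∈ range (n + 1), min (lam (i + 1)) (ρ (i + 1)) = partSize (n + 1) lam + partSize n ρ := by
    rw [← partSize_succ_of_eq_zero hρ, partSize, partSize, ← sum_add_distrib, ← sum_add_distrib]
    exact sum_congr rfl fun i _ => max_add_min _ _
  have hμ : partSize (n + 1) μ = ∑ i ∈ range n, μ (i + 2) + μ 1 := sum_range_succ' _ _
  omega

theorem toggleUp_spec (hρ : IsPartition n ρ)
    (hν : IsHorizontalStrip ν lam ∧ IsHorizontalStrip ν ρ)
    (hsize : partSize n ρ ≤ partSize n ν + d) :
    IsPartition (n + 1) (toggleUp n d lam ρ ν) ∧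
      (IsHorizontalStrip lam (toggleUp n d lam ρ ν) ∧
        IsHorizontalStrip ρ (toggleUp n d lam ρ ν)) ∧
      partSize (n + 1) (toggleUp n d lam ρ ν) = partSize (n + 1) lam + d := by
  have hint := isHorizontalStrip_below_both_iff.1 hν
  have hrow (i : ℕ) (hi : 1 ≤ i) :
      max (lam (i + 1)) (ρ (i + 1)) ≤ toggleUp n d lam ρ ν (i + 1) ∧
        toggleUp n d lam ρ ν (i + 1) ≤ min (lam i) (ρ i) ∧
        ν i + toggleUp n d lam ρ ν (i + 1) = max (lam (i + 1)) (ρ (i + 1)) + min (lam i) (ρ i) := by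
    rw [toggleUp_succ hi]
    have := hint i hi
    omega
  have hstrips : IsHorizontalStrip lam (toggleUp n d lam ρ ν) ∧
      IsHorizontalStrip ρ (toggleUp n d lam ρ ν) :=
    isHorizontalStrip_above_both_iff.2
      ⟨by rw [toggleUp_one]; omega, fun i hi => ⟨(hrow i hi).1, (hrow i hi).2.1⟩⟩
  have hsum := partSize_add_partSize_succ (hρ.apply_eq_zero (n + 1) (by omega))
    fun i hi _ => (hrow i hi).2.2
  rw [toggleUp_one] at hsum
  exact ⟨hstrips.2.isPartition_right hρ rfl, hstrips, by omega⟩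

theorem partSize_toggleDown (hρ : ρ (n + 1) = 0)
    (hμ : IsHorizontalStrip lam μ ∧ IsHorizontalStrip ρ μ)
    (hsize : partSize (n + 1) μ = partSize (n + 1) lam + d) :
    partSize n (toggleDown lam ρ μ) + d + max (lam 1) (ρ 1) = μ 1 + partSize n ρ := by
  have hint := (isHorizontalStrip_above_both_iff.1 hμ).2
  have := partSize_add_partSize_succ (lam := lam) (ν := toggleDown lam ρ μ) (μ := μ) hρ
    fun i hi _ => by
      rw [toggleDown_of_pos hi]
      have := hint i hi
      omega
  omega

theorem toggleDown_spec (hρ : IsPartition n ρ)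
    (hμ : IsHorizontalStrip lam μ ∧ IsHorizontalStrip ρ μ)
    (hsize : partSize (n + 1) μ = partSize (n + 1) lam + d) :
    IsPartition n (toggleDown lam ρ μ) ∧
      (IsHorizontalStrip (toggleDown lam ρ μ) lam ∧ IsHorizontalStrip (toggleDown lam ρ μ) ρ) ∧
      partSize n ρ ≤ partSize n (toggleDown lam ρ μ) + d := by
  have hint := isHorizontalStrip_above_both_iff.1 hμ
  have hstrips : IsHorizontalStrip (toggleDown lam ρ μ) lam ∧
      IsHorizontalStrip (toggleDown lam ρ μ) ρ := isHorizontalStrip_below_both_iff.2 fun i hi => by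
    rw [toggleDown_of_pos hi]
    have := hint.2 i hi
    omega
  have := partSize_toggleDown (hρ.apply_eq_zero _ (by omega)) hμ hsize
  exact ⟨hstrips.2.isPartition_left hρ rfl, hstrips, by omega⟩

theorem toggleDown_toggleUp (hν0 : ν 0 = 0)
    (hν : IsHorizontalStrip ν lam ∧ IsHorizontalStrip ν ρ) :
    toggleDown lam ρ (toggleUp n d lam ρ ν) = ν := by
  funext i
  rcases Nat.eq_zero_or_pos i with rfl | hi
  · exact hν0.symm
  rw [toggleDown_of_pos hi, toggleUp_succ hi]
  have := isHorizontalStrip_below_both_iff.1 hν i hi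
  omega

theorem toggleUp_toggleDown (hρ : ρ (n + 1) = 0) (hμ0 : μ 0 = 0)
    (hμ : IsHorizontalStrip lam μ ∧ IsHorizontalStrip ρ μ)
    (hsize : partSize (n + 1) μ = partSize (n + 1) lam + d) :
    toggleUp n d lam ρ (toggleDown lam ρ μ) = μ := by
  have hint := isHorizontalStrip_above_both_iff.1 hμ
  funext i
  obtain rfl | rfl | ⟨i, hi, rfl⟩ : i = 0 ∨ i = 1 ∨ ∃ k, 1 ≤ k ∧ i = k + 1 := by
    rcases Nat.lt_or_ge 1 i with h | h
    · exact Or.inr (Or.inr ⟨i - 1, by omega, by omega⟩)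
    · omega
  · exact hμ0.symm
  · rw [toggleUp_one]
    have := partSize_toggleDown hρ hμ hsize
    omega
  · rw [toggleUp_succ hi, toggleDown_of_pos hi]
    have := hint.2 i hi
    omega

theorem sum_stripsBelow_pieriShapesUpTo {M : Type*} [AddCommMonoid M] (f : (ℕ → ℕ) → M)
    (n d : ℕ) (lam : ℕ → ℕ) :
    ∑ ν ∈ stripsBelow n lam, ∑ ρ ∈ pieriShapesUpTo n ν d, f ρ =
      ∑ μ ∈ pieriShapes (n + 1) lam d, ∑ ρ ∈ stripsBelow n μ, f ρ := by
  rw [sum_sigma', sum_sigma']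
  refine sum_nbij' (fun p => ⟨toggleUp n d lam p.2 p.1, p.2⟩)
    (fun p => ⟨toggleDown lam p.2 p.1, p.2⟩) ?_ ?_ ?_ ?_ fun _ _ => rfl
  all_goals
    rintro ⟨σ, ρ⟩ hp
    simp only [mem_sigma, mem_stripsBelow, mem_pieriShapesUpTo, mem_pieriShapes] at hp ⊢
  · obtain ⟨⟨-, hνlam⟩, hρ, hνρ, hsize⟩ := hp
    obtain ⟨hμ, hstrips, hμsize⟩ := toggleUp_spec hρ ⟨hνlam, hνρ⟩ hsize
    exact ⟨⟨hμ, hstrips.1, hμsize⟩, hρ, hstrips.2⟩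
  · obtain ⟨⟨-, hlamμ, hsize⟩, hρ, hρμ⟩ := hp
    obtain ⟨hν, hstrips, hνsize⟩ := toggleDown_spec hρ ⟨hlamμ, hρμ⟩ hsize
    exact ⟨⟨hν, hstrips.1⟩, hρ, hstrips.2, hνsize⟩
  · obtain ⟨⟨hν, hνlam⟩, -, hνρ, -⟩ := hp
    rw [toggleDown_toggleUp hν.apply_zero ⟨hνlam, hνρ⟩]
  · obtain ⟨⟨hμ, hlamμ, hsize⟩, hρ, hρμ⟩ := hp
    rw [toggleUp_toggleDown (hρ.apply_eq_zero _ (by omega)) hμ.apply_zero ⟨hlamμ, hρμ⟩ hsize]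

end Exchange

theorem ssytCount_rowShape_mul (d : ℕ) {n : ℕ} {lam : ℕ → ℕ} (hlam : IsPartition n lam) :
    ssytCount n (rowShape d) * ssytCount n lam = ∑ μ ∈ pieriShapes n lam d, ssytCount n μ := by
  induction n generalizing lam d with
  | zero =>
    obtain rfl := hlam.eq_zero_of_zero
    rcases d with _ | d
    · have hrow : rowShape 0 = 0 := funext fun i => by simp [rowShape]
      have hmem : (0 : ℕ → ℕ) ∈ pieriShapes 0 0 0 :=
        mem_pieriShapes.2 ⟨hlam, ⟨fun _ _ => le_rfl, fun _ _ => le_rfl⟩, rfl⟩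
      rw [sum_eq_single_of_mem 0 hmem fun μ hμ => absurd (mem_pieriShapes.1 hμ).1.eq_zero_of_zero,
        hrow, ssytCount_zero_shape, one_mul]
    · rw [ssytCount_eq_zero (isPartition_rowShape (n := 1) rfl).succ_le (by simp [rowShape]),
        zero_mul, eq_comm]
      exact sum_eq_zero fun μ hμ => by simp [partSize, mem_pieriShapes] at hμ
  | succ n ih =>
    calc ssytCount (n + 1) (rowShape d) * ssytCount (n + 1) lam
        = ∑ ν ∈ stripsBelow n lam, ∑ e ∈ range (d + 1),
            ssytCount n (rowShape e) * ssytCount n ν := by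
          rw [ssytCount_rowShape_succ, ssytCount_succ hlam, sum_mul_sum, sum_comm]
      _ = ∑ ν ∈ stripsBelow n lam, ∑ ρ ∈ pieriShapesUpTo n ν d, ssytCount n ρ :=
          sum_congr rfl fun ν hν => by
            rw [sum_pieriShapesUpTo]
            exact sum_congr rfl fun e _ => ih e (mem_stripsBelow.1 hν).1
      _ = ∑ μ ∈ pieriShapes (n + 1) lam d, ∑ ρ ∈ stripsBelow n μ, ssytCount n ρ :=
          sum_stripsBelow_pieriShapesUpTo _ _ _ _
      _ = ∑ μ ∈ pieriShapes (n + 1) lam d, ssytCount (n + 1) μ :=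
          sum_congr rfl fun μ hμ => (ssytCount_succ (mem_pieriShapes.1 hμ).1).symm

theorem pieri_dimension_identity_general (n : ℕ) (Λ : ℕ → ℕ)
    (hΛ0 : Λ 0 = 0)
    (hΛdec : ∀ i, 1 ≤ i → Λ (i + 1) ≤ Λ i)
    (hΛparts : ∀ i, n < i → Λ i = 0)
    (d : ℕ) :
    ssytCount n (fun i => if i = 1 then d else 0) * ssytCount n Λ =
      ∑ᶠ (μ : ℕ → ℕ) (_ : μ 0 = 0 ∧ (∀ i, 1 ≤ i → μ (i + 1) ≤ μ i) ∧
          (∀ i, n < i → μ i = 0) ∧ (∀ i, 1 ≤ i → Λ i ≤ μ i) ∧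
          (∑ i ∈ Finset.Icc 1 n, μ i) = (∑ i ∈ Finset.Icc 1 n, Λ i) + d ∧
          (∀ i, 1 ≤ i → μ (i + 1) ≤ Λ i)),
        ssytCount n μ := by
  rw [finsum_cond_eq_sum_of_cond_iff _ fun {μ} _ => ?_]
  · exact ssytCount_rowShape_mul d ⟨hΛ0, hΛdec, hΛparts⟩
  · rw [mem_pieriShapes, partSize_eq_sum_Icc, partSize_eq_sum_Icc]
    exact ⟨fun ⟨h₀, h₁, h₂, h₃, h₄, h₅⟩ => ⟨⟨h₀, h₁, h₂⟩, ⟨h₃, h₅⟩, h₄⟩,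
      fun ⟨⟨h₀, h₁, h₂⟩, ⟨h₃, h₅⟩, h₄⟩ => ⟨h₀, h₁, h₂, h₃, h₄, h₅⟩⟩

/-- Pieri's formula on the level of dimensions: for `n ≥ 1`, a partition `λ` with at
most `n` parts and an integer `d ≥ 0`, the number of semistandard tableaux of shape
`(d)` with entries in `{1, …, n}` times the number of semistandard tableaux of shape
`λ` with entries in `{1, …, n}` equals the sum, over all partitions `μ` with at most
`n` parts obtained from `λ` by adding `d` boxes no two in the same column (i.e.
`λ ⊆ μ`, `|μ| = |λ| + d` and `μ_{i+1} ≤ λ_i` for all `i ≥ 1`), of the number of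
semistandard tableaux of shape `μ` with entries in `{1, …, n}`. -/
theorem pieri_dimension_identity (n : ℕ) (hn : 1 ≤ n) (Λ : ℕ → ℕ)
    (hΛ0 : Λ 0 = 0)
    (hΛdec : ∀ i, 1 ≤ i → Λ (i + 1) ≤ Λ i)
    (hΛparts : ∀ i, n < i → Λ i = 0)
    (d : ℕ) :
    ssytCount n (fun i => if i = 1 then d else 0) * ssytCount n Λ =
      ∑ᶠ (μ : ℕ → ℕ) (_ : μ 0 = 0 ∧ (∀ i, 1 ≤ i → μ (i + 1) ≤ μ i) ∧
          (∀ i, n < i → μ i = 0) ∧ (∀ i, 1 ≤ i → Λ i ≤ μ i) ∧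
          (∑ i ∈ Finset.Icc 1 n, μ i) = (∑ i ∈ Finset.Icc 1 n, Λ i) + d ∧
          (∀ i, 1 ≤ i → μ (i + 1) ≤ Λ i)),
        ssytCount n μ :=
  pieri_dimension_identity_general n Λ hΛ0 hΛdec hΛparts d
end

section
/- Let n ≥ 1 and let d_0 < d_1 < ⋯ < d_n be rational numbers. Then the Q-vector space of solutions β = (β_0, …, β_n) ∈ Q^{n+1} of the Herzog–Kühl equations ∑_{i=0}^{n} (−1)^i β_i d_i^k = 0 for k = 0, 1, …, n−1 has dimension exactly 1; it is spanned by the vector with entries β_i = ∏_{j≠i} 1/|d_j − d_i|. -/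
/-!
For distinct nodes `v₀, …, vₙ` with nodal weights `wᵢ = ∏_{j ≠ i} (vᵢ - vⱼ)⁻¹`, Lagrange
interpolation gives `P.coeff n = ∑ᵢ wᵢ P(vᵢ)` for `deg P ≤ n`; with `P = X ^ k`, `k < n`, this shows
that `w` solves the unsigned equations `∑ᵢ βᵢ vᵢ ^ k = 0`. Conversely, a solution `β` pairs with any
`P` of degree `≤ n` only through its top coefficient, and pairing it with the Lagrange basis
polynomial `ℓᵢ` (leading coefficient `wᵢ`) gives `βᵢ = wᵢ ∑ⱼ βⱼ vⱼ ^ n`. For increasing nodes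
`∏_{j ≠ i} (dᵢ - dⱼ)` has sign `(-1) ^ (n - i)`, which turns the nodal weights into the
Herzog–Kühl weights and absorbs the signs `(-1) ^ i` of the equations.
-/

open Finset Polynomial

namespace Lagrange

variable {F ι : Type*} [Field F] {s : Finset ι} {v : ι → F} {n : ℕ}

theorem sum_mul_eval_eq_coeff_mul {β : ι → F}
    (hβ : ∀ k < n, ∑ i ∈ s, β i * v i ^ k = 0) {P : F[X]} (hP : P.natDegree ≤ n) :
    ∑ i ∈ s, β i * P.eval (v i) = P.coeff n * ∑ i ∈ s, β i * v i ^ n := by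
  simp_rw [eval_eq_sum_range' (Nat.lt_succ_of_le hP), mul_sum, sum_range_succ]
  rw [sum_add_distrib, sum_comm, sum_eq_zero fun k hk => ?_, zero_add]
  · exact sum_congr rfl fun i _ => by ring
  · simp_rw [mul_left_comm (β _), ← mul_sum, hβ k (mem_range.mp hk), mul_zero]

variable [DecidableEq ι]

theorem sum_pow_mul_nodalWeight_eq_zero (hvs : Set.InjOn v s) {k : ℕ} (hk : k + 1 < #s) :
    ∑ i ∈ s, v i ^ k * nodalWeight s v i = 0 := by
  have hdeg : (X ^ k : F[X]).degree < #s := by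
    rw [degree_X_pow]; exact_mod_cast (Nat.lt_succ_self k).trans hk
  have := coeff_eq_sum hvs hdeg
  rw [coeff_X_pow, if_neg (by omega)] at this
  simp_rw [this, eval_pow, eval_X, nodalWeight, prod_inv_distrib, div_eq_mul_inv]

theorem eq_mul_nodalWeight_of_sum_mul_pow_eq_zero (hvs : Set.InjOn v s) (hs : #s = n + 1)
    {β : ι → F} (hβ : ∀ k < n, ∑ i ∈ s, β i * v i ^ k = 0) {i : ι} (hi : i ∈ s) :
    β i = (∑ j ∈ s, β j * v j ^ n) * nodalWeight s v i := by
  have hdeg : (Lagrange.basis s v i).natDegree = n := by rw [natDegree_basis hvs hi, hs]; rfl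
  have hcoeff : (Lagrange.basis s v i).coeff n = nodalWeight s v i := by
    rw [← hdeg, ← leadingCoeff, leadingCoeff_basis hvs hi, nodalWeight, prod_inv_distrib]
  have heval : ∑ j ∈ s, β j * (Lagrange.basis s v i).eval (v j) = β i := by
    rw [sum_eq_single_of_mem i hi fun j hj hji => by rw [eval_basis_of_ne hji.symm hj, mul_zero],
      eval_basis_self hvs hi, mul_one]
  rw [← heval, sum_mul_eval_eq_coeff_mul hβ hdeg.le, hcoeff, mul_comm]

theorem sum_mul_pow_eq_zero_iff (hvs : Set.InjOn v s) (hs : #s = n + 1) (β : ι → F) :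
    (∀ k < n, ∑ i ∈ s, β i * v i ^ k = 0) ↔ ∃ c : F, ∀ i ∈ s, β i = c * nodalWeight s v i := by
  refine ⟨fun hβ => ⟨_, fun i hi => eq_mul_nodalWeight_of_sum_mul_pow_eq_zero hvs hs hβ hi⟩, ?_⟩
  rintro ⟨c, hc⟩ k hk
  rw [sum_congr rfl fun i hi => by rw [hc i hi], ← mul_zero c,
    ← sum_pow_mul_nodalWeight_eq_zero hvs (k := k) (by omega), mul_sum]
  exact sum_congr rfl fun i _ => by ring

end Lagrange

theorem prod_abs_sub_inv_eq_neg_one_pow_mul_nodalWeight {K : Type*} [Field K] [LinearOrder K]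
    [IsStrictOrderedRing K] {n : ℕ} {d : Fin (n + 1) → K} (hd : StrictMono d) (i : Fin (n + 1)) :
    ∏ j ∈ univ.erase i, |d j - d i|⁻¹ = (-1) ^ (n - i : ℕ) * Lagrange.nodalWeight univ d i := by
  have hfactor : ∀ j ∈ univ.erase i, |d j - d i|⁻¹ = (if i < j then -1 else 1) * (d i - d j)⁻¹ := by
    intro j hj
    rcases lt_or_gt_of_ne (ne_of_mem_erase hj) with hji | hij
    · rw [abs_of_neg (sub_neg.mpr (hd hji)), if_neg hji.not_gt, one_mul, neg_sub]
    · rw [abs_of_pos (sub_pos.mpr (hd hij)), if_pos hij, ← neg_sub, inv_neg, neg_one_mul]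
  have hsigns : ∏ j ∈ univ.erase i, (if i < j then (-1 : K) else 1) = (-1) ^ (n - i : ℕ) := by
    rw [prod_ite, prod_const, prod_const_one, mul_one]
    have hfilter : (univ.erase i).filter (i < ·) = Ioi i := by
      ext j
      simp only [mem_filter, mem_erase, mem_univ, mem_Ioi, and_true]
      exact ⟨And.right, fun h => ⟨h.ne', h⟩⟩
    rw [hfilter, Fin.card_Ioi, Nat.add_sub_cancel]
  rw [prod_congr rfl hfactor, prod_mul_distrib, hsigns, Lagrange.nodalWeight]

theorem herzog_kuhl_solution_space_general (n : ℕ) (d : Fin (n + 1) → ℚ)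
    (hd : StrictMono d) :
    {β : Fin (n + 1) → ℚ | ∀ k, k < n → ∑ i : Fin (n + 1), (-1 : ℚ) ^ (i : ℕ) * β i * d i ^ k = 0}
        = ↑(Submodule.span ℚ
            ({fun i => ∏ j ∈ Finset.univ.erase i, |d j - d i|⁻¹} :
              Set (Fin (n + 1) → ℚ))) ∧
    (fun i : Fin (n + 1) => ∏ j ∈ Finset.univ.erase i, |d j - d i|⁻¹) ≠ 0 := by
  set w : Fin (n + 1) → ℚ := fun i => ∏ j ∈ univ.erase i, |d j - d i|⁻¹
  have hw i : w i = (-1) ^ (n - i : ℕ) * Lagrange.nodalWeight univ d i :=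
    prod_abs_sub_inv_eq_neg_one_pow_mul_nodalWeight hd i
  have hsign (i : Fin (n + 1)) : ((-1 : ℚ) ^ (i : ℕ)) * (-1) ^ (n - i : ℕ) = (-1) ^ n := by
    rw [← pow_add, Nat.add_sub_cancel' (Fin.is_le i)]
  refine ⟨Set.ext fun β => ?_, Function.ne_iff.mpr ⟨0, ?_⟩⟩
  · refine (Lagrange.sum_mul_pow_eq_zero_iff hd.injective.injOn (card_fin _)
      (fun i => (-1) ^ (i : ℕ) * β i)).trans ?_
    simp only [SetLike.mem_coe, Submodule.mem_span_singleton, funext_iff, Pi.smul_apply,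
      smul_eq_mul, mem_univ, forall_const, hw]
    have hsq (m : ℕ) : ((-1 : ℚ) ^ m) * (-1) ^ m = 1 := by rw [← mul_pow]; norm_num
    constructor
    · rintro ⟨c, hc⟩
      refine ⟨c * (-1) ^ n, fun i => ?_⟩
      rw [← hsign i]
      linear_combination (c * (-1) ^ (i : ℕ) * Lagrange.nodalWeight univ d i) * hsq (n - i)
        - (-1) ^ (i : ℕ) * hc i + β i * hsq i
    · rintro ⟨a, ha⟩
      refine ⟨a * (-1) ^ n, fun i => ?_⟩
      rw [← hsign i]
      linear_combination -(-1) ^ (i : ℕ) * ha i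
  · rw [hw, Pi.zero_apply]
    exact mul_ne_zero (pow_ne_zero _ (by norm_num))
      (Lagrange.nodalWeight_ne_zero hd.injective.injOn (mem_univ _))

/-- For `n ≥ 1` and rationals `d_0 < d_1 < ⋯ < d_n`, the space of solutions
`β ∈ ℚ^{n+1}` of the Herzog–Kühl equations `∑_{i=0}^n (-1)^i β_i d_i^k = 0` for
`k = 0, 1, …, n-1` is exactly the span of the nonzero vector with entries
`β_i = ∏_{j ≠ i} 1 / |d_j - d_i|`; in particular it has dimension exactly 1. -/
theorem herzog_kuhl_solution_space (n : ℕ) (hn : 1 ≤ n) (d : Fin (n + 1) → ℚ)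
    (hd : StrictMono d) :
    {β : Fin (n + 1) → ℚ | ∀ k, k < n → ∑ i : Fin (n + 1), (-1 : ℚ) ^ (i : ℕ) * β i * d i ^ k = 0}
        = ↑(Submodule.span ℚ
            ({fun i => ∏ j ∈ Finset.univ.erase i, |d j - d i|⁻¹} :
              Set (Fin (n + 1) → ℚ))) ∧
    (fun i : Fin (n + 1) => ∏ j ∈ Finset.univ.erase i, |d j - d i|⁻¹) ≠ 0 :=
  herzog_kuhl_solution_space_general n d hd
end

section
/- Let n ≥ 1 and let d_0 < d_1 < ⋯ < d_n be rational numbers. If β = (β_0, …, β_n) ∈ Q^{n+1} is a nonzero solution of the Herzog–Kühl equations ∑_{i=0}^{n} (−1)^i β_i d_i^k = 0 for k = 0, 1, …, n−1, then β_i ≠ 0 for every i, and all the β_i have the same sign (all strictly positive or all strictly negative). -/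
/-!
Put `w i = (-1)^i β_i`. The Herzog–Kühl equations say that `∑ w_i q(d_i) = 0` for every
polynomial `q` of degree `< n`. For consecutive indices `a, a + 1`, the nodal polynomial
`q = ∏_{j ≠ a, a+1} (X - d_j)` has degree `n - 1` and vanishes at every other node, so
`w_a q(d_a) + w_{a+1} q(d_{a+1}) = 0`. No node lies between `d_a` and `d_{a+1}`, so `q(d_a)` and
`q(d_{a+1})` have the same sign; as `(-1)^a` and `(-1)^(a+1)` are opposite, so do `β_a` and
`β_{a+1}`. Hence all `β_i` have the sign of `β_0`, which is nonzero since `β ≠ 0`.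
-/

open Polynomial Finset Lagrange

theorem sum_mul_eval_eq_zero_of_natDegree_lt {ι R : Type*} [CommSemiring R] (s : Finset ι)
    (w x : ι → R) {n : ℕ} (hw : ∀ k < n, ∑ i ∈ s, w i * x i ^ k = 0) {q : R[X]}
    (hq : q.natDegree < n) : ∑ i ∈ s, w i * q.eval (x i) = 0 := by
  simp_rw [eval_eq_sum_range' hq, mul_sum]
  rw [sum_comm]
  refine sum_eq_zero fun k hk => ?_
  simp_rw [mul_left_comm (w _), ← mul_sum, hw k (mem_range.mp hk), mul_zero]

theorem mul_eval_nodal_add_mul_eval_nodal_eq_zero {ι R : Type*} [CommRing R] [Nontrivial R]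
    [Fintype ι] [DecidableEq ι] {n : ℕ} (hcard : Fintype.card ι = n + 1) (w x : ι → R)
    (hw : ∀ k < n, ∑ i, w i * x i ^ k = 0) {a b : ι} (hab : a ≠ b) :
    w a * (nodal {a, b}ᶜ x).eval (x a) + w b * (nodal {a, b}ᶜ x).eval (x b) = 0 := by
  have hdeg : (nodal {a, b}ᶜ x).natDegree < n := by
    have hle := card_le_univ ({a, b} : Finset ι)
    rw [card_pair hab] at hle
    rw [natDegree_nodal, card_compl, card_pair hab]
    omega
  rw [← sum_mul_eval_eq_zero_of_natDegree_lt _ w x hw hdeg, Fintype.sum_eq_add a b hab]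
  rintro j ⟨hja, hjb⟩
  rw [eval_nodal_at_node (by simp [hja, hjb]), mul_zero]

theorem eval_nodal_mul_eval_nodal_pos {ι R : Type*} [CommRing R] [LinearOrder R]
    [IsStrictOrderedRing R] {s : Finset ι} {v : ι → R} {x y : R}
    (h : ∀ i ∈ s, (v i < x ∧ v i < y) ∨ (x < v i ∧ y < v i)) :
    0 < (nodal s v).eval x * (nodal s v).eval y := by
  rw [eval_nodal, eval_nodal, ← prod_mul_distrib]
  refine prod_pos fun i hi => ?_
  rcases h i hi with ⟨hx, hy⟩ | ⟨hx, hy⟩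
  · exact mul_pos (sub_pos.2 hx) (sub_pos.2 hy)
  · exact mul_pos_of_neg_of_neg (sub_neg.2 hx) (sub_neg.2 hy)

theorem StrictMono.lt_castSucc_or_succ_lt {α : Type*} [Preorder α] {n : ℕ}
    {d : Fin (n + 1) → α} (hd : StrictMono d) (a : Fin n) {j : Fin (n + 1)}
    (hj : j ∈ ({a.castSucc, a.succ} : Finset (Fin (n + 1)))ᶜ) :
    (d j < d a.castSucc ∧ d j < d a.succ) ∨ (d a.castSucc < d j ∧ d a.succ < d j) := by
  simp only [mem_compl, mem_insert, mem_singleton, not_or] at hj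
  rcases lt_or_gt_of_ne hj.1 with h | h
  · exact Or.inl ⟨hd h, hd (h.trans Fin.castSucc_lt_succ)⟩
  · have h' : a.succ < j := lt_of_le_of_ne (Fin.castSucc_lt_iff_succ_le.mp h) (Ne.symm hj.2)
    exact Or.inr ⟨hd h, hd h'⟩

theorem sign_succ_eq_sign_castSucc_of_alternating_sum_eq_zero {R : Type*} [Field R]
    [LinearOrder R] [IsStrictOrderedRing R] {n : ℕ} {d : Fin (n + 1) → R} (hd : StrictMono d)
    {β : Fin (n + 1) → R}
    (hβ : ∀ k < n, ∑ i : Fin (n + 1), (-1 : R) ^ (i : ℕ) * β i * d i ^ k = 0) (a : Fin n) :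
    SignType.sign (β a.succ) = SignType.sign (β a.castSucc) := by
  set q := nodal ({a.castSucc, a.succ} : Finset (Fin (n + 1)))ᶜ d
  have hpos : 0 < q.eval (d a.castSucc) * q.eval (d a.succ) :=
    eval_nodal_mul_eval_nodal_pos fun _ => hd.lt_castSucc_or_succ_lt a
  have hpair := mul_eval_nodal_add_mul_eval_nodal_eq_zero (Fintype.card_fin _)
    (fun i => (-1 : R) ^ (i : ℕ) * β i) d hβ (Fin.castSucc_lt_succ (i := a)).ne
  simp only [Fin.val_castSucc, Fin.val_succ, pow_succ] at hpair
  have hcross : β a.castSucc * q.eval (d a.castSucc) = β a.succ * q.eval (d a.succ) := by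
    have h : (-1 : R) ^ (a : ℕ) * (β a.castSucc * q.eval (d a.castSucc) -
        β a.succ * q.eval (d a.succ)) = 0 := by linear_combination hpair
    linear_combination (mul_eq_zero.mp h).resolve_left (pow_ne_zero _ (by norm_num))
  have hratio : β a.succ = q.eval (d a.castSucc) / q.eval (d a.succ) * β a.castSucc := by
    have hne : q.eval (d a.succ) ≠ 0 := right_ne_zero_of_mul hpos.ne'
    field_simp
    linear_combination -hcross
  rw [hratio, sign_mul, sign_pos (div_pos_iff.2 (mul_pos_iff.1 hpos)), one_mul]

theorem Fin.apply_eq_apply_zero_of_succ_eq_castSucc {α : Type*} {n : ℕ} {f : Fin (n + 1) → α}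
    (h : ∀ a : Fin n, f a.succ = f a.castSucc) (i : Fin (n + 1)) : f i = f 0 := by
  induction i using Fin.induction with
  | zero => rfl
  | succ a ih => rw [h, ih]

theorem herzog_kuhl_nonzero_same_sign_general (n : ℕ) (d : Fin (n + 1) → ℚ)
    (hd : StrictMono d) (β : Fin (n + 1) → ℚ) (hβ : β ≠ 0)
    (hHK : ∀ k, k < n → ∑ i : Fin (n + 1), (-1 : ℚ) ^ (i : ℕ) * β i * d i ^ k = 0) :
    (∀ i, β i ≠ 0) ∧ ((∀ i, 0 < β i) ∨ (∀ i, β i < 0)) := by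
  have hsign : ∀ i, SignType.sign (β i) = SignType.sign (β 0) :=
    Fin.apply_eq_apply_zero_of_succ_eq_castSucc (f := fun i => SignType.sign (β i))
      (sign_succ_eq_sign_castSucc_of_alternating_sum_eq_zero hd hHK)
  have hβ0 : β 0 ≠ 0 := fun h0 => hβ (funext fun i => by simpa [h0] using hsign i)
  rcases hβ0.lt_or_gt with h0 | h0
  · have hneg : ∀ i, β i < 0 := fun i => sign_eq_neg_one_iff.mp ((hsign i).trans (sign_neg h0))
    exact ⟨fun i => (hneg i).ne, Or.inr hneg⟩
  · have hpos : ∀ i, 0 < β i := fun i => sign_eq_one_iff.mp ((hsign i).trans (sign_pos h0))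
    exact ⟨fun i => (hpos i).ne', Or.inl hpos⟩

/-- For `n ≥ 1` and rationals `d_0 < d_1 < ⋯ < d_n`, any nonzero solution
`β ∈ ℚ^{n+1}` of the Herzog–Kühl equations `∑_{i=0}^n (-1)^i β_i d_i^k = 0` for
`k = 0, 1, …, n-1` has all entries nonzero, and all entries have the same sign. -/
theorem herzog_kuhl_nonzero_same_sign (n : ℕ) (hn : 1 ≤ n) (d : Fin (n + 1) → ℚ)
    (hd : StrictMono d) (β : Fin (n + 1) → ℚ) (hβ : β ≠ 0)
    (hHK : ∀ k, k < n → ∑ i : Fin (n + 1), (-1 : ℚ) ^ (i : ℕ) * β i * d i ^ k = 0) :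
    (∀ i, β i ≠ 0) ∧ ((∀ i, 0 < β i) ∨ (∀ i, β i < 0)) :=
  herzog_kuhl_nonzero_same_sign_general n d hd β hβ hHK
end
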